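/- Let 0 < q < 1 and let p, r, g, y, f, h : ℝ → ℝ. Assume that for all x ≠ 0: (1/q)·(D_{q⁻¹}(D_q y))(x) + p(x)·(D_q y)(x) + r(x)·y(x) = g(x), and (D_q f)(x) = p(x)·f(x). Then for all x ≠ 0, the q-derivative at x of the function G(x) := f(x)·( y(x)·(D_{q⁻¹}h)(x) − h(x)·(D_{q⁻¹}y)(x) ) satisfies (D_q G)(x) + f(x)·h(x)·g(x) = f(x)·( (1/q)·(D_{q⁻¹}(D_q h))(x) + p(x)·(D_q h)(x) + r(x)·h(x) )·y(x). -/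

import Mathlib

/-- The Jackson `q`-derivative `(D_q f)(x) = (f(x) - f(qx)) / ((1-q)x)`. -/
noncomputable def qDeriv (q : ℝ) (f : ℝ → ℝ) (x : ℝ) : ℝ :=
  (f x - f (q * x)) / ((1 - q) * x)

/-- The `q⁻¹`-derivative `(D_{q⁻¹} f)(x) = q (f(x/q) - f(x)) / ((1-q)x)`. -/
noncomputable def qInvDeriv (q : ℝ) (f : ℝ → ℝ) (x : ℝ) : ℝ :=
  q * (f (x / q) - f x) / ((1 - q) * x)

/-!
The function in brackets is a `q`-Wronskian `W = y D_{q⁻¹}h - h D_{q⁻¹}y`. Since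
`D_{q⁻¹}u(x) = D_q u(x/q)`, the `q`-product rule gives `D_q W = q⁻¹ (y D_{q⁻¹}D_q h - h D_{q⁻¹}D_q y)`,
the mixed terms `D_q y D_q h` cancelling, and `W(qx) = y D_q h - h D_q y`. The product rule for
`f W`, together with `D_q f = p f` and the equation for `y`, then turns `D_q(f W) + f h g` into the
stated expression, exactly as in the classical Lagrange identity.
-/

theorem qDeriv_mul (q : ℝ) (u v : ℝ → ℝ) (x : ℝ) :
    qDeriv q (fun t => u t * v t) x = u x * qDeriv q v x + v (q * x) * qDeriv q u x := by
  simp only [qDeriv]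
  ring

theorem qDeriv_sub (q : ℝ) (u v : ℝ → ℝ) (x : ℝ) :
    qDeriv q (fun t => u t - v t) x = qDeriv q u x - qDeriv q v x := by
  simp only [qDeriv]
  ring

theorem qInvDeriv_mul_left {q : ℝ} (hq : q ≠ 0) (u : ℝ → ℝ) (x : ℝ) :
    qInvDeriv q u (q * x) = qDeriv q u x := by
  simp only [qInvDeriv, qDeriv, mul_div_cancel_left₀ x hq]
  field_simp

theorem qDeriv_qInvDeriv {q : ℝ} (hq : q ≠ 0) (u : ℝ → ℝ) (x : ℝ) :
    qDeriv q (qInvDeriv q u) x = 1 / q * qInvDeriv q (qDeriv q u) x := by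
  simp only [qDeriv, qInvDeriv, mul_div_cancel_left₀ x hq, mul_div_cancel₀ _ hq]
  field_simp

theorem qDeriv_mul_comp_mul_sub (q : ℝ) (u v : ℝ → ℝ) (x : ℝ) :
    u (q * x) * qDeriv q v x - v (q * x) * qDeriv q u x
      = u x * qDeriv q v x - v x * qDeriv q u x := by
  simp only [qDeriv]
  ring

noncomputable def qWronskian (q : ℝ) (y h : ℝ → ℝ) (t : ℝ) : ℝ :=
  y t * qInvDeriv q h t - h t * qInvDeriv q y t

theorem qWronskian_mul_left {q : ℝ} (hq : q ≠ 0) (y h : ℝ → ℝ) (x : ℝ) :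
    qWronskian q y h (q * x) = y x * qDeriv q h x - h x * qDeriv q y x := by
  rw [qWronskian, qInvDeriv_mul_left hq, qInvDeriv_mul_left hq, qDeriv_mul_comp_mul_sub]

theorem qDeriv_qWronskian {q : ℝ} (hq : q ≠ 0) (y h : ℝ → ℝ) (x : ℝ) :
    qDeriv q (qWronskian q y h) x
      = 1 / q * (y x * qInvDeriv q (qDeriv q h) x - h x * qInvDeriv q (qDeriv q y) x) := by
  change qDeriv q (fun t => y t * qInvDeriv q h t - h t * qInvDeriv q y t) x = _
  rw [qDeriv_sub, qDeriv_mul, qDeriv_mul, qInvDeriv_mul_left hq,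
    qInvDeriv_mul_left hq, qDeriv_qInvDeriv hq, qDeriv_qInvDeriv hq]
  ring

theorem lagrangian_NHSOqDE'_general (q : ℝ) (hq : 0 < q)
    (p r g y f h : ℝ → ℝ)
    (hy : ∀ x : ℝ, x ≠ 0 →
      (1 / q) * qInvDeriv q (qDeriv q y) x + p x * qDeriv q y x + r x * y x = g x)
    (hf : ∀ x : ℝ, x ≠ 0 → qDeriv q f x = p x * f x) :
    ∀ x : ℝ, x ≠ 0 →
      qDeriv q (fun t => f t * (y t * qInvDeriv q h t - h t * qInvDeriv q y t)) x
      + f x * h x * g x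
      = f x * ((1 / q) * qInvDeriv q (qDeriv q h) x + p x * qDeriv q h x + r x * h x)
          * y x := by
  intro x hx
  change qDeriv q (fun t => f t * qWronskian q y h t) x + _ = _
  rw [qDeriv_mul, qDeriv_qWronskian hq.ne', qWronskian_mul_left hq.ne', hf x hx, ← hy x hx]
  ring

/-- Lagrangian method for nonhomogeneous second-order q-difference equations
(version with `D_q` in the first-order term). -/
theorem lagrangian_NHSOqDE' (q : ℝ) (hq : 0 < q) (hq1 : q < 1)
    (p r g y f h : ℝ → ℝ)
    (hy : ∀ x : ℝ, x ≠ 0 →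
      (1 / q) * qInvDeriv q (qDeriv q y) x + p x * qDeriv q y x + r x * y x = g x)
    (hf : ∀ x : ℝ, x ≠ 0 → qDeriv q f x = p x * f x) :
    ∀ x : ℝ, x ≠ 0 →
      qDeriv q (fun t => f t * (y t * qInvDeriv q h t - h t * qInvDeriv q y t)) x
      + f x * h x * g x
      = f x * ((1 / q) * qInvDeriv q (qDeriv q h) x + p x * qDeriv q h x + r x * h x)
          * y x :=
  lagrangian_NHSOqDE'_general q hq p r g y f h hy hf
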